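/- arXiv:2301.00862 — 5 statements merged into one kernel-verified Lean document; each statement's English description precedes it below -/
import Mathlib

section
/- For a root ideal Ψ with invariants as above and convention 𝚎_{ℓ+1}(Ψ) = n+1, ℓ = ℓ(Ψ): Σ_{j=1}^{ℓ} Σ_{k = 𝚎_j(Ψ)}^{𝚎_{j+1}(Ψ)−1} (𝚒_j(Ψ) + n − k) = ℓ(w₀^Ψ) + |Ψ|, where ℓ(w₀^Ψ) = (n − e_1(Ψ))(n − d_1(Ψ))/2 and |Ψ| is the cardinality of Ψ. -/
/-- `d_i(Ψ) = #{j : i ≤ j ≤ n, (i,j) ∉ Ψ}`. -/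
def dInv (n : ℕ) (Ψ : Finset (ℕ × ℕ)) (i : ℕ) : ℕ :=
  ((Finset.Icc i n).filter (fun j => (i, j) ∉ Ψ)).card

/-- `e_i(Ψ) = i + d_i(Ψ)`. -/
def eInv (n : ℕ) (Ψ : Finset (ℕ × ℕ)) (i : ℕ) : ℕ := i + dInv n Ψ i

/-- `I(Ψ) = {1 ≤ i < n : e_i(Ψ) ≤ n and d_i(Ψ) ≤ d_{i+1}(Ψ)}`. -/
def Iset (n : ℕ) (Ψ : Finset (ℕ × ℕ)) : Finset ℕ :=
  (Finset.Ico 1 n).filter (fun i => eInv n Ψ i ≤ n ∧ dInv n Ψ i ≤ dInv n Ψ (i + 1))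

/-!
Upward closedness of `Ψ` makes `i ↦ e_i` weakly increasing for `i ≥ 1`, and `e_n = n + 1`;
so `I(Ψ)` consists of the last index at which each value `≤ n` is taken. Consequently, for
`𝚎_j ≤ k < 𝚎_{j+1}` the index `𝚒_j` is `#{i ∈ [1, n] : e_i ≤ k}`, and the left-hand side
telescopes to `∑_{k = e_1}^{n} (#{i : e_i ≤ k} + (n - k))`. By double counting the first part is
`∑_i (n + 1 - e_i)`, which is `|Ψ|` counted row by row, and the second part is a Gauss sum.
-/

open Finset

theorem Finset.sum_Icc_sum_Ico_eq_sum_Ico {M : Type*} [AddCommMonoid M] (g : ℕ → M)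
    {a : ℕ → ℕ} {l : ℕ} (ha : MonotoneOn a (Icc 1 (l + 1))) :
    ∑ j ∈ Icc 1 l, ∑ k ∈ Ico (a j) (a (j + 1)), g k = ∑ k ∈ Ico (a 1) (a (l + 1)), g k := by
  induction l with
  | zero => simp
  | succ l ih =>
    rw [sum_Icc_succ_top (by omega), ih (ha.mono (Icc_subset_Icc_right (by omega))),
      sum_Ico_consecutive _ (ha (by simp) (by simp) (by omega)) (ha (by simp) (by simp) (by omega))]

theorem Nat.sum_Ico_sub (a n : ℕ) :
    ∑ k ∈ Ico a (n + 1), (n - k) = (n - a) * (n + 1 - a) / 2 := by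
  rw [sum_Ico_eq_sum_range, ← sum_range_reflect]
  rw [sum_congr rfl fun j hj => (by rw [mem_range] at hj; omega :
    n - (a + (n + 1 - a - 1 - j)) = j), sum_range_id, Nat.mul_comm]
  congr 2; omega

variable {n : ℕ} {Ψ : Finset (ℕ × ℕ)}

theorem dInv_le (i : ℕ) : dInv n Ψ i ≤ n + 1 - i :=
  (card_filter_le _ _).trans (Nat.card_Icc i n).le

theorem eInv_le_succ {i : ℕ} (hi : i ≤ n + 1) : eInv n Ψ i ≤ n + 1 := by
  have := dInv_le (n := n) (Ψ := Ψ) i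
  unfold eInv; omega

theorem eInv_self (hn : (n, n) ∉ Ψ) : eInv n Ψ n = n + 1 := by
  simp [eInv, dInv, filter_singleton, hn]

theorem dInv_le_dInv_succ_add_one
    (hup : ∀ i j i' : ℕ, (i, j) ∈ Ψ → 1 ≤ i' → i' < i → (i', j) ∈ Ψ) {i : ℕ} (hi : 1 ≤ i) :
    dInv n Ψ i ≤ dInv n Ψ (i + 1) + 1 := by
  refine (card_le_card fun j hj => ?_).trans (card_insert_le i _)
  simp only [mem_filter, mem_Icc, mem_insert] at hj ⊢
  by_cases hji : j = i
  · exact .inl hji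
  · exact .inr ⟨⟨by omega, hj.1.2⟩, fun hmem => hj.2 (hup _ _ _ hmem hi (by omega))⟩

theorem monotoneOn_eInv
    (hup : ∀ i j i' : ℕ, (i, j) ∈ Ψ → 1 ≤ i' → i' < i → (i', j) ∈ Ψ) :
    MonotoneOn (eInv n Ψ) (Set.Ici 1) := by
  refine monotoneOn_of_le_add_one Set.ordConnected_Ici fun i _ hi _ => ?_
  have := dInv_le_dInv_succ_add_one (n := n) hup hi
  unfold eInv; omega

theorem mem_Iset_iff {i : ℕ} : i ∈ Iset n Ψ ↔
    (1 ≤ i ∧ i < n) ∧ eInv n Ψ i ≤ n ∧ eInv n Ψ i < eInv n Ψ (i + 1) := by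
  rw [Iset, mem_filter, mem_Ico]
  unfold eInv
  omega

theorem exists_mem_Iset_eInv_eq
    (hup : ∀ i j i' : ℕ, (i, j) ∈ Ψ → 1 ≤ i' → i' < i → (i', j) ∈ Ψ) (hn : (n, n) ∉ Ψ)
    {i : ℕ} (hi : 1 ≤ i) (hin : eInv n Ψ i ≤ n) : ∃ i' ∈ Iset n Ψ, eInv n Ψ i' = eInv n Ψ i := by
  have hlt : i < n := by
    have : i ≠ n := by rintro rfl; rw [eInv_self hn] at hin; omega
    have : i ≤ eInv n Ψ i := Nat.le_add_right _ _
    omega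
  have hle := monotoneOn_eInv (n := n) hup (Set.mem_Ici.2 hi)
    (Set.mem_Ici.2 (by omega : 1 ≤ i + 1)) (Nat.le_succ i)
  rcases hle.lt_or_eq with hstep | heq
  · exact ⟨i, mem_Iset_iff.2 ⟨⟨hi, hlt⟩, hin, hstep⟩, rfl⟩
  · obtain ⟨i', hi', he⟩ := exists_mem_Iset_eInv_eq hup hn (by omega : 1 ≤ i + 1) (heq ▸ hin)
    exact ⟨i', hi', he.trans heq.symm⟩
termination_by n - i

theorem card_filter_mem_eq_sub_eInv (i : ℕ) :
    #{j ∈ Icc i n | (i, j) ∈ Ψ} = n + 1 - eInv n Ψ i := by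
  have := card_filter_add_card_filter_not (s := Icc i n) (fun j => (i, j) ∈ Ψ)
  have := dInv_le (n := n) (Ψ := Ψ) i
  rw [Nat.card_Icc] at *
  unfold eInv dInv at *
  omega

theorem card_eq_sum_sub_eInv (hsub : ∀ p ∈ Ψ, 1 ≤ p.1 ∧ p.1 < p.2 ∧ p.2 ≤ n) :
    #Ψ = ∑ i ∈ Icc 1 n, (n + 1 - eInv n Ψ i) := by
  rw [card_eq_sum_card_fiberwise (f := Prod.fst) (t := Icc 1 n)
    fun p hp => by have := hsub p hp; simp only [coe_Icc, Set.mem_Icc]; omega]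
  refine sum_congr rfl fun i _ => ?_
  rw [← card_filter_mem_eq_sub_eInv]
  refine card_nbij' Prod.snd (Prod.mk i) (fun p hp => ?_) (fun j hj => ?_) (fun p hp => ?_)
    (fun j _ => rfl)
  · simp only [coe_filter, Set.mem_ofPred_eq, mem_Icc] at hp ⊢
    have := hsub p hp.1
    exact ⟨⟨by omega, this.2.2⟩, hp.2 ▸ hp.1⟩
  · simp only [coe_filter, Set.mem_ofPred_eq] at hj ⊢
    simpa using hj.2
  · simp only [coe_filter, Set.mem_ofPred_eq] at hp
    exact Prod.ext hp.2.symm rfl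

theorem card_filter_le_eq_of_monotoneOn {e : ℕ → ℕ} (he : MonotoneOn e (Set.Ici 1))
    {m k : ℕ} (hm : m ≤ n) (hk : e m ≤ k) (hk' : k < e (m + 1)) :
    #{i ∈ Icc 1 n | e i ≤ k} = m := by
  suffices {i ∈ Icc 1 n | e i ≤ k} = Icc 1 m by rw [this, Nat.card_Icc]; omega
  ext i
  simp only [mem_filter, mem_Icc]
  constructor
  · rintro ⟨⟨hi1, -⟩, hik⟩
    refine ⟨hi1, not_lt.1 fun hmi => ?_⟩
    have := he (Set.mem_Ici.2 (by omega : 1 ≤ m + 1)) (Set.mem_Ici.2 hi1) hmi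
    omega
  · rintro ⟨hi1, him⟩
    have := he (Set.mem_Ici.2 hi1) (Set.mem_Ici.2 (hi1.trans him)) him
    exact ⟨⟨hi1, him.trans hm⟩, this.trans hk⟩

theorem sum_card_filter_eInv_le
    (hsub : ∀ p ∈ Ψ, 1 ≤ p.1 ∧ p.1 < p.2 ∧ p.2 ≤ n)
    (hup : ∀ i j i' : ℕ, (i, j) ∈ Ψ → 1 ≤ i' → i' < i → (i', j) ∈ Ψ) :
    ∑ k ∈ Ico (eInv n Ψ 1) (n + 1), #{i ∈ Icc 1 n | eInv n Ψ i ≤ k} = #Ψ := by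
  rw [card_eq_sum_sub_eInv hsub]
  refine (sum_card_bipartiteAbove_eq_sum_card_bipartiteBelow
    (fun i k => eInv n Ψ i ≤ k)).symm.trans (sum_congr rfl fun i hi => ?_)
  have h1i : eInv n Ψ 1 ≤ eInv n Ψ i :=
    monotoneOn_eInv hup (Set.mem_Ici.2 le_rfl) (Set.mem_Ici.2 (mem_Icc.1 hi).1) (mem_Icc.1 hi).1
  rw [bipartiteAbove, ← Nat.card_Ico (eInv n Ψ i) (n + 1)]
  congr 1
  ext k
  simp only [mem_filter, mem_Ico]
  omega

structure EnumeratesIset (n : ℕ) (Ψ : Finset (ℕ × ℕ)) (l : ℕ) (ee ii : ℕ → ℕ) : Prop where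
  lt : ∀ j j' : ℕ, 1 ≤ j → j < j' → j' ≤ l → ee j < ee j'
  mem : ∀ j : ℕ, 1 ≤ j → j ≤ l → ii j ∈ Iset n Ψ ∧ eInv n Ψ (ii j) = ee j
  surj : ∀ i ∈ Iset n Ψ, ∃ j : ℕ, 1 ≤ j ∧ j ≤ l ∧ ee j = eInv n Ψ i
  top : ee (l + 1) = n + 1

namespace EnumeratesIset

variable {l : ℕ} {ee ii : ℕ → ℕ}

theorem le (h : EnumeratesIset n Ψ l ee ii) {j : ℕ} (hj1 : 1 ≤ j) (hjl : j ≤ l) : ee j ≤ n := by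
  obtain ⟨hmem, he⟩ := h.mem j hj1 hjl
  exact he ▸ (mem_Iset_iff.1 hmem).2.1

theorem strictMonoOn (h : EnumeratesIset n Ψ l ee ii) : StrictMonoOn ee (Icc 1 (l + 1)) := by
  intro j hj j' hj' hjj'
  rw [coe_Icc, Set.mem_Icc] at hj hj'
  rcases hj'.2.lt_or_eq with hlt | rfl
  · exact h.lt j j' hj.1 hjj' (by omega)
  · have := h.le hj.1 (by omega)
    rw [h.top]
    omega

theorem exists_eq_eInv (hup : ∀ i j i' : ℕ, (i, j) ∈ Ψ → 1 ≤ i' → i' < i → (i', j) ∈ Ψ)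
    (hn : (n, n) ∉ Ψ) (h : EnumeratesIset n Ψ l ee ii) {i : ℕ} (hi : 1 ≤ i) (hin : i ≤ n + 1) :
    ∃ j ∈ Icc 1 (l + 1), ee j = eInv n Ψ i := by
  rcases (eInv_le_succ (Ψ := Ψ) hin).lt_or_eq with hlt | heq
  · obtain ⟨i', hi', he⟩ := exists_mem_Iset_eInv_eq hup hn hi (by omega)
    obtain ⟨j, hj1, hjl, hej⟩ := h.surj i' hi'
    exact ⟨j, mem_Icc.2 ⟨hj1, by omega⟩, hej.trans he⟩
  · exact ⟨l + 1, mem_Icc.2 ⟨by omega, le_rfl⟩, h.top.trans heq.symm⟩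

theorem eInv_one (hup : ∀ i j i' : ℕ, (i, j) ∈ Ψ → 1 ≤ i' → i' < i → (i', j) ∈ Ψ)
    (hn : (n, n) ∉ Ψ) (h : EnumeratesIset n Ψ l ee ii) : eInv n Ψ 1 = ee 1 := by
  apply le_antisymm
  · rcases Nat.eq_zero_or_pos l with rfl | hl
    · exact h.top ▸ eInv_le_succ (by omega)
    · obtain ⟨hmem, he⟩ := h.mem 1 le_rfl hl
      have hi1 := (mem_Iset_iff.1 hmem).1.1
      exact he ▸ monotoneOn_eInv hup (Set.mem_Ici.2 le_rfl) (Set.mem_Ici.2 hi1) hi1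
  · obtain ⟨j, hj, hej⟩ := h.exists_eq_eInv hup hn le_rfl (by omega)
    exact hej ▸ h.strictMonoOn.monotoneOn (mem_Icc.2 ⟨le_rfl, by omega⟩) hj (mem_Icc.1 hj).1

theorem ee_succ_le (hup : ∀ i j i' : ℕ, (i, j) ∈ Ψ → 1 ≤ i' → i' < i → (i', j) ∈ Ψ)
    (hn : (n, n) ∉ Ψ) (h : EnumeratesIset n Ψ l ee ii) {j : ℕ} (hj1 : 1 ≤ j) (hjl : j ≤ l) :
    ee (j + 1) ≤ eInv n Ψ (ii j + 1) := by
  obtain ⟨hmem, he⟩ := h.mem j hj1 hjl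
  obtain ⟨⟨-, hin⟩, -, hstep⟩ := mem_Iset_iff.1 hmem
  obtain ⟨j', hj', hej'⟩ := h.exists_eq_eInv hup hn (by omega : 1 ≤ ii j + 1) (by omega)
  have hjj' : j < j' :=
    (h.strictMonoOn.lt_iff_lt (mem_Icc.2 ⟨hj1, by omega⟩) hj').1 (by omega)
  exact hej' ▸ h.strictMonoOn.monotoneOn (mem_Icc.2 ⟨by omega, by omega⟩) hj' hjj'

theorem card_filter_eInv_le (hup : ∀ i j i' : ℕ, (i, j) ∈ Ψ → 1 ≤ i' → i' < i → (i', j) ∈ Ψ)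
    (hn : (n, n) ∉ Ψ) (h : EnumeratesIset n Ψ l ee ii) {j : ℕ} (hj1 : 1 ≤ j) (hjl : j ≤ l)
    {k : ℕ} (hk : k ∈ Ico (ee j) (ee (j + 1))) : #{i ∈ Icc 1 n | eInv n Ψ i ≤ k} = ii j := by
  obtain ⟨hmem, he⟩ := h.mem j hj1 hjl
  have hin := (mem_Iset_iff.1 hmem).1.2
  have := h.ee_succ_le hup hn hj1 hjl
  rw [mem_Ico] at hk
  exact card_filter_le_eq_of_monotoneOn (monotoneOn_eInv hup) hin.le (by omega) (by omega)

end EnumeratesIset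

theorem dimension_sum_formula_general (n : ℕ) (Ψ : Finset (ℕ × ℕ))
    (hsub : ∀ p ∈ Ψ, 1 ≤ p.1 ∧ p.1 < p.2 ∧ p.2 ≤ n)
    (hup : ∀ i j i' : ℕ, (i, j) ∈ Ψ → 1 ≤ i' → i' < i → (i', j) ∈ Ψ)
    (l : ℕ)
    (ee ii : ℕ → ℕ)
    (hmono : ∀ j j' : ℕ, 1 ≤ j → j < j' → j' ≤ l → ee j < ee j')
    (hii : ∀ j : ℕ, 1 ≤ j → j ≤ l → ii j ∈ Iset n Ψ ∧ eInv n Ψ (ii j) = ee j)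
    (hsurj : ∀ i ∈ Iset n Ψ, ∃ j : ℕ, 1 ≤ j ∧ j ≤ l ∧ ee j = eInv n Ψ i)
    (htop : ee (l + 1) = n + 1) :
    ∑ j ∈ Finset.Icc 1 l, ∑ k ∈ Finset.Ico (ee j) (ee (j + 1)), (ii j + n - k)
      = (n - eInv n Ψ 1) * (n - dInv n Ψ 1) / 2 + Ψ.card := by
  have h : EnumeratesIset n Ψ l ee ii := ⟨hmono, hii, hsurj, htop⟩
  have hn : (n, n) ∉ Ψ := fun hmem => (hsub _ hmem).2.1.false
  set f : ℕ → ℕ := fun k => #{i ∈ Icc 1 n | eInv n Ψ i ≤ k}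
  have hblock : ∀ j ∈ Icc 1 l, ∀ k ∈ Ico (ee j) (ee (j + 1)), ii j + n - k = f k + (n - k) := by
    intro j hj k hk
    obtain ⟨hj1, hjl⟩ := mem_Icc.1 hj
    have hkn : ee (j + 1) ≤ ee (l + 1) :=
      h.strictMonoOn.monotoneOn (mem_Icc.2 ⟨by omega, by omega⟩) (mem_Icc.2 ⟨by omega, le_rfl⟩)
        (by omega)
    have hf : f k = ii j := h.card_filter_eInv_le hup hn hj1 hjl hk
    have := (mem_Ico.1 hk).2
    omega
  have hd : n + 1 - eInv n Ψ 1 = n - dInv n Ψ 1 := by unfold eInv; omega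
  calc ∑ j ∈ Icc 1 l, ∑ k ∈ Ico (ee j) (ee (j + 1)), (ii j + n - k)
      = ∑ j ∈ Icc 1 l, ∑ k ∈ Ico (ee j) (ee (j + 1)), (f k + (n - k)) :=
        sum_congr rfl fun j hj => sum_congr rfl (hblock j hj)
    _ = ∑ k ∈ Ico (eInv n Ψ 1) (n + 1), (f k + (n - k)) := by
        rw [sum_Icc_sum_Ico_eq_sum_Ico _ h.strictMonoOn.monotoneOn, h.top, h.eInv_one hup hn]
    _ = (n - eInv n Ψ 1) * (n - dInv n Ψ 1) / 2 + #Ψ := by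
        rw [sum_add_distrib, sum_card_filter_eInv_le hsub hup, Nat.sum_Ico_sub, hd, add_comm]

/-- With the convention `𝚎_{ℓ+1}(Ψ) = n + 1`,
`Σ_{j=1}^{ℓ} Σ_{k=𝚎_j}^{𝚎_{j+1}−1} (𝚒_j + n − k) = ℓ(w₀^Ψ) + |Ψ|`,
where `ℓ(w₀^Ψ) = (n − e_1(Ψ))(n − d_1(Ψ))/2`. -/
theorem dimension_sum_formula (n : ℕ) (Ψ : Finset (ℕ × ℕ))
    (hsub : ∀ p ∈ Ψ, 1 ≤ p.1 ∧ p.1 < p.2 ∧ p.2 ≤ n)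
    (hup : ∀ i j i' : ℕ, (i, j) ∈ Ψ → 1 ≤ i' → i' < i → (i', j) ∈ Ψ)
    (hright : ∀ i j j' : ℕ, (i, j) ∈ Ψ → j < j' → j' ≤ n → (i, j') ∈ Ψ)
    (l : ℕ) (hl : l = (Iset n Ψ).card)
    (ee ii : ℕ → ℕ)
    (hmono : ∀ j j' : ℕ, 1 ≤ j → j < j' → j' ≤ l → ee j < ee j')
    (hii : ∀ j : ℕ, 1 ≤ j → j ≤ l → ii j ∈ Iset n Ψ ∧ eInv n Ψ (ii j) = ee j)
    (hsurj : ∀ i ∈ Iset n Ψ, ∃ j : ℕ, 1 ≤ j ∧ j ≤ l ∧ ee j = eInv n Ψ i)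
    (htop : ee (l + 1) = n + 1) :
    ∑ j ∈ Finset.Icc 1 l, ∑ k ∈ Finset.Ico (ee j) (ee (j + 1)), (ii j + n - k)
      = (n - eInv n Ψ 1) * (n - dInv n Ψ 1) / 2 + Ψ.card :=
  dimension_sum_formula_general n Ψ hsub hup l ee ii hmono hii hsurj htop
end

section
/- In the affine symmetric group W̃ of type A_{n−1}^{(1)} (generators s_0, s_1, …, s_{n−1}, 1 ≤ i < e ≤ n), let C_{i,e} denote the word (s_{i−1}, s_{i−2}, …, s_1, s_0, s_{n−1}, …, s_e) (indices decreasing modulo n from i−1 down to e, of total length i + n − e). Then for 1 ≤ i < e < n and any e' with e ≤ e' < n or 0 ≤ e' < i−1, the Demazure products satisfy D_{C_{i−1,e'}} ∘ D_{C_{i,e}} = D_{C_{i,e}} ∘ D_{C_{i,e'+1}}, where D_w denotes multiplication in the 0-Hecke monoid (Demazure product) of W̃. -/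
/-- The cyclically decreasing word of `C_{i,e}`: indices run from `i−1` down to `e`
cyclically modulo `n` (passing through `0` when `i ≤ e`); its length is
`i − e` if `e < i` and `i + n − e` otherwise. -/
def CWord (n : ℕ) (i e : ℕ) : List (ZMod n) :=
  (List.range (if e < i then i - e else i + n - e)).map
    (fun t => (((i : ℤ) - 1 - (t : ℤ) : ℤ) : ZMod n))

/-- The 0-Hecke (Demazure) product `C_{i,e} = T_{i−1} T_{i−2} ⋯ T_e`. -/
def CProd {M : Type*} [Monoid M] (n : ℕ) (T : ZMod n → M) (i e : ℕ) : M :=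
  ((CWord n i e).map T).prod

lemma sandwich {M : Type*} [Monoid M] (x y P Q : M) (hP : x * P = P * x)
    (hQ : y * Q = Q * y) (hb : x * y * x = y * x * y) :
    x * (P * (y * x) * Q) = P * (y * x) * Q * y := by
  calc x * (P * (y * x) * Q) = P * (x * y * x) * Q := by
        rw [← mul_assoc, ← mul_assoc, hP]; simp only [mul_assoc]
    _ = P * (y * x * y) * Q := by rw [hb]
    _ = P * (y * x) * (y * Q) := by simp only [mul_assoc]
    _ = P * (y * x) * Q * y := by rw [hQ]; simp only [mul_assoc]

lemma cast_ne_one {n : ℕ} (hn : 3 ≤ n) (k : ℕ) (h2 : 2 ≤ k) (hk : k + 2 ≤ n) :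
    (k : ZMod n) ≠ 1 := by
  haveI : NeZero n := ⟨by omega⟩
  haveI : Fact (1 < n) := ⟨by omega⟩
  intro h
  have := congrArg ZMod.val h
  rw [ZMod.val_cast_of_lt (by omega), ZMod.val_one] at this
  omega

lemma neg_cast_ne_one {n : ℕ} (hn : 3 ≤ n) (k : ℕ) (h2 : 2 ≤ k) (hk : k + 2 ≤ n) :
    -(k : ZMod n) ≠ 1 := by
  have hnk : ((n - k : ℕ) : ZMod n) = -(k : ZMod n) := by
    rw [Nat.cast_sub (by omega)]
    simp
  rw [← hnk]
  exact cast_ne_one hn (n - k) (by omega) (by omega)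

lemma keyB {M : Type*} [Monoid M] (n : ℕ) (hn : 3 ≤ n) (T : ZMod n → M)
    (hcomm : ∀ a b : ZMod n, a - b ≠ 1 → b - a ≠ 1 → T a * T b = T b * T a)
    (hbraid : ∀ a : ZMod n, T a * T (a + 1) * T a = T (a + 1) * T a * T (a + 1))
    (i e s : ℕ) (hi : 1 ≤ i) (hie : i < e) (hen : e < n) (hs1 : 1 ≤ s)
    (hs2 : s + e < i + n) :
    T (((i : ℤ) - 1 - s : ℤ) : ZMod n) * CProd n T i e
      = CProd n T i e * T ((((i : ℤ) - 1 - s : ℤ) : ZMod n) + 1) := by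
  haveI : NeZero n := ⟨by omega⟩
  set c : ℕ → ZMod n := fun t => (((i : ℤ) - 1 - (t : ℤ) : ℤ) : ZMod n) with hc
  set f : ℕ → M := fun t => T (c t) with hf
  set L := i + n - e with hLdef
  have hLn : L + 1 ≤ n := by omega
  have hsL : s < L := by omega
  have hcd : ∀ t u : ℕ, t ≤ u → c t = c u + ((u - t : ℕ) : ZMod n) := by
    intro t u h
    simp only [hc]
    rw [Nat.cast_sub h]
    push_cast
    ring
  have hone : c (s - 1) = c s + 1 := by
    simp only [hc]
    rw [show ((s - 1 : ℕ) : ℤ) = (s : ℤ) - 1 by omega]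
    push_cast
    ring
  have hcommute : ∀ t u : ℕ, t + 2 ≤ u → u + 2 ≤ t + n → f t * f u = f u * f t := by
    intro t u h1 h2
    have e1 : c t = c u + ((u - t : ℕ) : ZMod n) := hcd t u (by omega)
    have d1 : c t - c u = ((u - t : ℕ) : ZMod n) := by rw [e1]; ring
    have d2 : c u - c t = -((u - t : ℕ) : ZMod n) := by rw [e1]; ring
    simp only [hf]
    refine hcomm _ _ ?_ ?_
    · rw [d1]; exact cast_ne_one hn _ (by omega) (by omega)
    · rw [d2]; exact neg_cast_ne_one hn _ (by omega) (by omega)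
  have hword : CWord n i e = (List.range L).map c := by
    unfold CWord
    rw [if_neg (by omega)]
    simp only [bind_pure_comp, List.map_eq_map, List.map_map]
    rfl
  have hW : CProd n T i e = ((List.range L).map f).prod := by
    unfold CProd
    rw [hword, List.map_map]
    rfl
  have hsplit : List.range L
      = List.range (s - 1) ++ [s - 1, s] ++ (List.range (L - (s + 1))).map ((s + 1) + ·) := by
    conv_lhs => rw [show L = (s + 1) + (L - (s + 1)) by omega, List.range_add]
    congr 1
    conv_lhs => rw [show s + 1 = (s - 1) + 2 by omega, List.range_add]
    congr 1
    simp [List.range_succ]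
    omega
  set P := ((List.range (s - 1)).map f).prod with hP
  set Q := (((List.range (L - (s + 1))).map ((s + 1) + ·)).map f).prod with hQ
  have hW2 : CProd n T i e = P * (f (s - 1) * f s) * Q := by
    rw [hW, hsplit]
    simp [hP, hQ, List.prod_append, List.map_append, List.map_map, mul_assoc]
  have commP : f s * P = P * f s := by
    refine (Commute.list_prod_right _ _ ?_).eq
    intro y hy
    simp only [List.mem_map, List.mem_range] at hy
    obtain ⟨t, ht, rfl⟩ := hy
    exact (hcommute t s (by omega) (by omega)).symm
  have commQ : f (s - 1) * Q = Q * f (s - 1) := by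
    refine (Commute.list_prod_right _ _ ?_).eq
    intro y hy
    simp only [List.mem_map, List.mem_range] at hy
    obtain ⟨a, ⟨t, ht, rfl⟩, rfl⟩ := hy
    exact hcommute (s - 1) ((s + 1) + t) (by omega) (by omega)
  have hb : f s * f (s - 1) * f s = f (s - 1) * f s * f (s - 1) := by
    simp only [hf, hone]
    exact hbraid (c s)
  have main : f s * (P * (f (s - 1) * f s) * Q) = P * (f (s - 1) * f s) * Q * f (s - 1) :=
    sandwich (f s) (f (s - 1)) P Q commP commQ hb
  calc T (c s) * CProd n T i e = f s * (P * (f (s - 1) * f s) * Q) := by rw [hW2]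
    _ = P * (f (s - 1) * f s) * Q * f (s - 1) := main
    _ = CProd n T i e * T (c s + 1) := by rw [← hW2]; simp only [hf, hone]

lemma CWord_eq (n i e : ℕ) :
    CWord n i e = (List.range (if e < i then i - e else i + n - e)).map
      (fun t : ℕ => ((((i : ℤ) - 1 - (t : ℤ)) : ℤ) : ZMod n)) := by
  unfold CWord
  simp only [bind_pure_comp, List.map_eq_map, List.map_map]
  rfl

lemma push_list {M : Type*} [Monoid M] {n : ℕ} (T : ZMod n → M) (W : M) :
    ∀ l : List (ZMod n), (∀ a ∈ l, T a * W = W * T (a + 1)) →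
      (l.map T).prod * W = W * ((l.map (· + 1)).map T).prod := by
  intro l
  induction l with
  | nil => simp
  | cons a l ih =>
    intro h
    simp only [List.map_cons, List.prod_cons]
    rw [mul_assoc, ih (fun b hb => h b (by simp [hb])), ← mul_assoc, h a (by simp),
      mul_assoc]

/-- In the 0-Hecke monoid of affine type `A_{n−1}^{(1)}`, for
`1 ≤ i < e < n` and `e ≤ e' < n` or `0 ≤ e' < i − 1`:
`D_{C_{i−1,e'}} ∘ D_{C_{i,e}} = D_{C_{i,e}} ∘ D_{C_{i,e'+1}}`. -/
theorem hecke_C_commutation {M : Type*} [Monoid M] (n : ℕ) (hn : 3 ≤ n)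
    (T : ZMod n → M)
    (hidem : ∀ a : ZMod n, T a * T a = T a)
    (hcomm : ∀ a b : ZMod n, a - b ≠ 1 → b - a ≠ 1 → T a * T b = T b * T a)
    (hbraid : ∀ a : ZMod n, T a * T (a + 1) * T a = T (a + 1) * T a * T (a + 1))
    (i e e' : ℕ) (hi : 1 ≤ i) (hie : i < e) (hen : e < n)
    (he' : (e ≤ e' ∧ e' < n) ∨ e' < i - 1) :
    CProd n T (i - 1) e' * CProd n T i e
      = CProd n T i e * CProd n T i (e' + 1) := by
  have hmap : (CWord n (i - 1) e').map (· + 1) = CWord n i (e' + 1) := by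
    rw [CWord_eq, CWord_eq, List.map_map]
    rw [show (if e' < i - 1 then i - 1 - e' else i - 1 + n - e')
        = (if e' + 1 < i then i - (e' + 1) else i + n - (e' + 1)) by split_ifs <;> omega]
    refine List.map_congr_left fun t _ => ?_
    simp only [Function.comp_apply]
    rw [Nat.cast_sub hi]
    push_cast
    ring
  have hstep : ∀ a ∈ CWord n (i - 1) e', T a * CProd n T i e = CProd n T i e * T (a + 1) := by
    intro a ha
    rw [CWord_eq] at ha
    simp only [List.mem_map, List.mem_range] at ha
    obtain ⟨t, ht, rfl⟩ := ha
    have ha' : ((((i - 1 : ℕ) : ℤ) - 1 - (t : ℤ) : ℤ) : ZMod n)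
        = (((i : ℤ) - 1 - ((t + 1 : ℕ) : ℤ) : ℤ) : ZMod n) := by
      rw [Nat.cast_sub hi]
      push_cast
      ring
    rw [ha']
    refine keyB n hn T hcomm hbraid i e (t + 1) hi hie hen (by omega) ?_
    rcases he' with he1 | he1 <;> split_ifs at ht <;> omega
  calc CProd n T (i - 1) e' * CProd n T i e
      = ((CWord n (i - 1) e').map T).prod * CProd n T i e := rfl
    _ = CProd n T i e * (((CWord n (i - 1) e').map (· + 1)).map T).prod :=
        push_list T (CProd n T i e) (CWord n (i - 1) e') hstep
    _ = CProd n T i e * CProd n T i (e' + 1) := by rw [hmap]; rfl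
end

section
/- In the 0-Hecke monoid of the affine Weyl group of type A_{n−1}^{(1)}, for 1 ≤ i < e ≤ n and any index j with e ≤ j < n or 0 ≤ j < i−1, the element T_j · C_{i,e} equals C_{i,e} · T_{j+1}, where C_{i,e} = T_{i−1} T_{i−2} ⋯ T_0 T_{n−1} ⋯ T_e (the cyclically decreasing product of length i + n − e). -/
/-! The word of `C_{i,e}` has length `i + n - e < n`, and `j` occurs in it at an interior position
with `j + 1` just before it, so `C_{i,e} = A · T_{j+1} T_j · B`. Every letter of `A` is at cyclic
distance at least 2 from `j`, and every letter of `B` from `j + 1`. Hence `T_j` commutes past `A`,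
the braid relation turns `T_j T_{j+1} T_j` into `T_{j+1} T_j T_{j+1}`, and the last `T_{j+1}`
commutes past `B`. -/

theorem List.map_range_eq_append_cons_cons {α : Type*} (f : ℕ → α) {p L : ℕ} (hp : 1 ≤ p)
    (hpL : p < L) :
    (List.range L).map f = (List.range (p - 1)).map f ++
      f (p - 1) :: f p :: (List.range (L - (p + 1))).map (fun t => f (p + 1 + t)) := by
  obtain ⟨q, rfl⟩ : ∃ q, p = q + 1 := ⟨p - 1, by omega⟩
  obtain ⟨m, rfl⟩ : ∃ m, L = q + 2 + m := ⟨L - (q + 2), by omega⟩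
  rw [show q + 2 + m - (q + 1 + 1) = m by omega, List.range_add, List.range_add]
  simp [List.range_succ, Function.comp_def, add_assoc]

theorem ZMod.natCast_ne_one_of_two_le {n d : ℕ} (h2 : 2 ≤ d) (hd : d + 2 ≤ n) :
    (d : ZMod n) ≠ 1 := by
  rw [← Nat.cast_one, Ne, ZMod.natCast_eq_natCast_iff', Nat.mod_eq_of_lt (by omega),
    Nat.mod_eq_of_lt (by omega)]
  omega

theorem ZMod.neg_natCast_ne_one {n d : ℕ} (hd : d + 2 ≤ n) : -(d : ZMod n) ≠ 1 := by
  rw [Ne, neg_eq_iff_add_eq_zero, ← Nat.cast_succ, ZMod.natCast_eq_zero_iff]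
  exact Nat.not_dvd_of_pos_of_lt (Nat.succ_pos d) (by omega)

theorem braid_slide {M : Type*} [Monoid M] {x y a b : M} (ha : Commute x a)
    (hb : Commute y b) (hxy : x * y * x = y * x * y) :
    x * (a * (y * (x * b))) = a * (y * (x * b)) * y :=
  calc x * (a * (y * (x * b))) = a * (x * y * x) * b := by
        rw [← mul_assoc, ha.eq]; simp only [mul_assoc]
    _ = a * (y * x * y) * b := by rw [hxy]
    _ = a * (y * (x * b)) * y := by simp only [mul_assoc, hb.eq]

theorem CWord_eq_map_range (n i e : ℕ) :
    CWord n i e = (List.range (if e < i then i - e else i + n - e)).map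
      (fun t : ℕ => (i : ZMod n) - 1 - t) := by
  simp [CWord, ← List.map_eq_flatMap, Function.comp_def]

section DecreasingProd

variable {M : Type*} [Monoid M] {n : ℕ} (T : ZMod n → M)

def decreasingProd (c : ZMod n) (L : ℕ) : M :=
  ((List.range L).map fun t : ℕ => T (c - t)).prod

variable {T}

theorem commute_of_sub_eq_natCast
    (hcomm : ∀ a b : ZMod n, a - b ≠ 1 → b - a ≠ 1 → T a * T b = T b * T a)
    {a b : ZMod n} {d : ℕ} (hab : a - b = d) (h2 : 2 ≤ d) (hd : d + 2 ≤ n) :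
    Commute (T a) (T b) :=
  hcomm a b (hab ▸ ZMod.natCast_ne_one_of_two_le h2 hd)
    (by rw [← neg_sub, hab]; exact ZMod.neg_natCast_ne_one hd)

theorem mul_decreasingProd
    (hcomm : ∀ a b : ZMod n, a - b ≠ 1 → b - a ≠ 1 → T a * T b = T b * T a)
    (hbraid : ∀ a : ZMod n, T a * T (a + 1) * T a = T (a + 1) * T a * T (a + 1))
    (c : ZMod n) {L p : ℕ} (hLn : L < n) (hp : 1 ≤ p) (hpL : p < L) :
    T (c - p) * decreasingProd T c L = decreasingProd T c L * T (c - p + 1) := by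
  have hprev : c - (p - 1 : ℕ) = c - p + 1 := by push_cast [Nat.cast_sub hp]; ring
  rw [decreasingProd, List.map_range_eq_append_cons_cons _ hp hpL, List.prod_append,
    List.prod_cons, List.prod_cons, hprev]
  refine braid_slide (Commute.list_prod_right _ _ ?_)
    (Commute.list_prod_right _ _ ?_) (hbraid _)
  · simp only [List.mem_map, List.mem_range]
    rintro _ ⟨t, ht, rfl⟩
    refine (commute_of_sub_eq_natCast hcomm (d := p - t) ?_ (by omega) (by omega)).symm
    push_cast [Nat.cast_sub (by omega : t ≤ p)]; ring
  · simp only [List.mem_map, List.mem_range]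
    rintro _ ⟨t, ht, rfl⟩
    refine commute_of_sub_eq_natCast hcomm (d := t + 2) ?_ (by omega) (by omega)
    push_cast; ring

end DecreasingProd

theorem hecke_T_slide_general {M : Type*} [Monoid M] (n : ℕ)
    (T : ZMod n → M)
    (hcomm : ∀ a b : ZMod n, a - b ≠ 1 → b - a ≠ 1 → T a * T b = T b * T a)
    (hbraid : ∀ a : ZMod n, T a * T (a + 1) * T a = T (a + 1) * T a * T (a + 1))
    (i e : ℕ) (hi : 1 ≤ i) (hie : i < e) (hen : e ≤ n)
    (j : ℕ) (hj : (e ≤ j ∧ j < n) ∨ j < i - 1) :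
    T ((j : ℕ) : ZMod n) * CProd n T i e
      = CProd n T i e * T ((j + 1 : ℕ) : ZMod n) := by
  obtain ⟨p, hp, hpL, hpj⟩ : ∃ p : ℕ, 1 ≤ p ∧ p < i + n - e ∧ (i : ZMod n) - 1 - p = j := by
    rcases hj with ⟨hej, hjn⟩ | hji
    · refine ⟨n + i - 1 - j, by omega, by omega, ?_⟩
      push_cast [Nat.cast_sub (by omega : j ≤ n + i - 1), Nat.cast_sub (by omega : 1 ≤ n + i),
        ZMod.natCast_self]
      ring
    · refine ⟨i - 1 - j, by omega, by omega, ?_⟩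
      push_cast [Nat.cast_sub (by omega : j ≤ i - 1), Nat.cast_sub hi]
      ring
  have hC : CProd n T i e = decreasingProd T ((i : ZMod n) - 1) (i + n - e) := by
    rw [CProd, CWord_eq_map_range, if_neg (by omega), List.map_map]
    rfl
  rw [hC, Nat.cast_succ, ← hpj]
  exact mul_decreasingProd hcomm hbraid _ (by omega) hp hpL

/-- In the 0-Hecke monoid of affine type `A_{n−1}^{(1)}`, for
`1 ≤ i < e ≤ n` and `e ≤ j < n` or `0 ≤ j < i − 1`:
`T_j · C_{i,e} = C_{i,e} · T_{j+1}`. -/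
theorem hecke_T_slide {M : Type*} [Monoid M] (n : ℕ) (hn : 3 ≤ n)
    (T : ZMod n → M)
    (hidem : ∀ a : ZMod n, T a * T a = T a)
    (hcomm : ∀ a b : ZMod n, a - b ≠ 1 → b - a ≠ 1 → T a * T b = T b * T a)
    (hbraid : ∀ a : ZMod n, T a * T (a + 1) * T a = T (a + 1) * T a * T (a + 1))
    (i e : ℕ) (hi : 1 ≤ i) (hie : i < e) (hen : e ≤ n)
    (j : ℕ) (hj : (e ≤ j ∧ j < n) ∨ j < i - 1) :
    T ((j : ℕ) : ZMod n) * CProd n T i e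
      = CProd n T i e * T ((j + 1 : ℕ) : ZMod n) :=
  hecke_T_slide_general n T hcomm hbraid i e hi hie hen j hj
end

section
/- Let v' be the longest element of the parabolic subgroup ⟨s_1, …, s_{i−1}⟩ ≅ S_i and v the longest element of ⟨s_0, s_1, …, s_{i−1}⟩ ≅ S_{i+1} inside the affine symmetric group of type A_{n−1}^{(1)}, with 1 ≤ i < e ≤ n. Then in the 0-Hecke monoid, C_{i,e} · D_{v'} = D_v · C_{i,e}, where C_{i,e} = T_{i−1} ⋯ T_1 T_0 T_{n−1} ⋯ T_e and D_w denotes the 0-Hecke element of w. -/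
/-- The 0-Hecke element `D_w` of the longest element `w` of the parabolic subgroup
generated by `s_off, s_{off+1}, …, s_{off+m−1}` (isomorphic to `S_{m+1}`),
computed on the standard reduced word
`(s_off)(s_{off+1} s_off) ⋯ (s_{off+m−1} ⋯ s_off)`. -/
def DLongest {M : Type*} [Monoid M] (n : ℕ) (T : ZMod n → M) (off m : ℕ) : M :=
  ((List.range m).map (fun a =>
    (((List.range (a + 1)).map (fun t => T ((off + a - t : ℕ) : ZMod n))).prod))).prod

namespace AffineZeroHecke

variable {M : Type*} [Monoid M] {n : ℕ}

structure BraidRelations (T : ZMod n → M) : Prop where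
  commute : ∀ a b : ZMod n, a - b ≠ 1 → b - a ≠ 1 → Commute (T a) (T b)
  braid : ∀ a : ZMod n, T a * T (a + 1) * T a = T (a + 1) * T a * T (a + 1)

def cyclicDescProd (T : ZMod n → M) (a : ZMod n) (L : ℕ) : M :=
  ((List.range L).map fun t : ℕ => T (a - t)).prod

def longestProd (T : ZMod n → M) (c : ZMod n) (m : ℕ) : M :=
  ((List.range m).map fun k : ℕ => cyclicDescProd T (c + k) (k + 1)).prod

variable (T : ZMod n → M)

@[simp]
lemma cyclicDescProd_zero (a : ZMod n) : cyclicDescProd T a 0 = 1 := rfl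

lemma cyclicDescProd_succ (a : ZMod n) (L : ℕ) :
    cyclicDescProd T a (L + 1) = cyclicDescProd T a L * T (a - L) :=
  List.prod_range_succ _ _

lemma cyclicDescProd_add (a : ZMod n) (k l : ℕ) :
    cyclicDescProd T a (k + l) = cyclicDescProd T a k * cyclicDescProd T (a - k) l := by
  simp only [cyclicDescProd, List.range_add, List.map_append, List.prod_append, List.map_map]
  congr 3
  ext t
  simp [sub_sub]

lemma cyclicDescProd_two (a : ZMod n) : cyclicDescProd T a 2 = T a * T (a - 1) := by
  simp [cyclicDescProd, List.range_succ]

lemma commute_cyclicDescProd {x : M} {a : ZMod n} {L : ℕ}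
    (h : ∀ t < L, Commute x (T (a - t))) : Commute x (cyclicDescProd T a L) :=
  Commute.list_prod_right _ _ (by simpa using h)

@[simp]
lemma longestProd_zero (c : ZMod n) : longestProd T c 0 = 1 := rfl

lemma longestProd_succ (c : ZMod n) (m : ℕ) :
    longestProd T c (m + 1) = longestProd T c m * cyclicDescProd T (c + m) (m + 1) :=
  List.prod_range_succ _ _

lemma DLongest_eq_longestProd (off m : ℕ) : DLongest n T off m = longestProd T off m := by
  unfold DLongest longestProd cyclicDescProd
  refine congrArg List.prod (List.map_congr_left fun k _ => ?_)
  refine congrArg List.prod (List.map_congr_left fun t ht => ?_)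
  rw [List.mem_range] at ht
  push_cast [Nat.cast_sub (show t ≤ off + k by omega)]
  rfl

lemma CProd_eq_cyclicDescProd {i e : ℕ} (h : i ≤ e) :
    CProd n T i e = cyclicDescProd T ((i : ZMod n) - 1) (i + n - e) := by
  simp [CProd, CWord, cyclicDescProd, if_neg (not_lt.2 h), ← List.map_eq_flatMap,
    Function.comp_def]

namespace BraidRelations

variable {T}

lemma commute_of_sub_eq (hT : BraidRelations T) {x y : ZMod n} {d : ℕ} (hd : 2 ≤ d)
    (hdn : d + 2 ≤ n) (hxy : y - x = d) : Commute (T x) (T y) := by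
  apply hT.commute
  · intro h
    have hzero : ((d + 1 : ℕ) : ZMod n) = 0 := by
      push_cast
      linear_combination -hxy - h
    have := Nat.le_of_dvd (by omega) ((ZMod.natCast_eq_zero_iff _ _).1 hzero)
    omega
  · intro h
    have := (ZMod.natCast_eq_natCast_iff' d 1 n).1 (by simpa [hxy] using h)
    rw [Nat.mod_eq_of_lt (by omega), Nat.mod_eq_of_lt (by omega)] at this
    omega

lemma cyclicDescProd_mul_T (hT : BraidRelations T) {b : ZMod n} {t L : ℕ} (ht : t + 2 ≤ L)
    (hL : L + 1 ≤ n) :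
    cyclicDescProd T (b + t) L * T b = T (b - 1) * cyclicDescProd T (b + t) L := by
  obtain ⟨s, rfl⟩ : ∃ s, L = t + 2 + s := ⟨L - t - 2, by omega⟩
  set P := cyclicDescProd T (b + t) t
  set R := cyclicDescProd T (b - 2) s
  have hsplit : cyclicDescProd T (b + t) (t + 2 + s) = P * (T b * T (b - 1)) * R := by
    rw [cyclicDescProd_add, cyclicDescProd_add, add_sub_cancel_right, cyclicDescProd_two,
      show b + t - ((t + 2 : ℕ) : ZMod n) = b - 2 by push_cast; ring]
  have hR : Commute (T b) R := commute_cyclicDescProd T fun r _ =>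
    (hT.commute_of_sub_eq (d := r + 2) (by omega) (by omega) (by push_cast; ring)).symm
  have hP : Commute (T (b - 1)) P := commute_cyclicDescProd T fun r _ =>
    hT.commute_of_sub_eq (d := t + 1 - r) (by omega) (by omega)
      (by rw [Nat.cast_sub (by omega)]; push_cast; ring)
  have hbraid : T b * T (b - 1) * T b = T (b - 1) * T b * T (b - 1) := by
    simpa using (hT.braid (b - 1)).symm
  rw [hsplit]
  calc P * (T b * T (b - 1)) * R * T b
      = P * (T b * T (b - 1) * T b) * R := by simp only [mul_assoc, hR.symm.eq]
    _ = T (b - 1) * (P * (T b * T (b - 1)) * R) := by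
      rw [hbraid]; simp only [← mul_assoc, ← hP.eq]

lemma cyclicDescProd_mul_cyclicDescProd (hT : BraidRelations T) {b : ZMod n} {t k L : ℕ}
    (h : t + k + 1 ≤ L) (hL : L + 1 ≤ n) :
    cyclicDescProd T (b + t) L * cyclicDescProd T b k
      = cyclicDescProd T (b - 1) k * cyclicDescProd T (b + t) L := by
  induction k with
  | zero => simp
  | succ k ih =>
    have hpush := hT.cyclicDescProd_mul_T (b := b - k) (t := t + k) (by omega) hL
    rw [show b - k + ((t + k : ℕ) : ZMod n) = b + t by push_cast; ring, sub_right_comm] at hpush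
    rw [cyclicDescProd_succ, cyclicDescProd_succ, ← mul_assoc, ih (by omega), mul_assoc, hpush,
      mul_assoc]

lemma cyclicDescProd_mul_longestProd (hT : BraidRelations T) {c : ZMod n} {m L : ℕ}
    (h : m + 1 ≤ L) (hL : L + 1 ≤ n) :
    cyclicDescProd T (c + m) L * longestProd T (c + 1) m
      = longestProd T c m * cyclicDescProd T (c + m) L := by
  suffices ∀ j ≤ m, cyclicDescProd T (c + m) L * longestProd T (c + 1) j
      = longestProd T c j * cyclicDescProd T (c + m) L from this m le_rfl
  intro j
  induction j with
  | zero => simp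
  | succ j ih =>
    intro hj
    have hpush := hT.cyclicDescProd_mul_cyclicDescProd (b := c + 1 + j) (t := m - 1 - j)
      (k := j + 1) (by omega) hL
    rw [show c + 1 + j + ((m - 1 - j : ℕ) : ZMod n) = c + m by
        rw [Nat.cast_sub (by omega), Nat.cast_sub (by omega)]; ring,
      show c + 1 + j - 1 = c + j by ring] at hpush
    rw [longestProd_succ, longestProd_succ, ← mul_assoc, ih (by omega), mul_assoc, hpush,
      mul_assoc]

lemma longestProd_mul_T (hT : BraidRelations T) (hidem : ∀ a, IsIdempotentElem (T a))
    {c : ZMod n} {m j : ℕ} (hj : j < m) (hm : m + 1 ≤ n) :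
    longestProd T c m * T (c + j) = longestProd T c m := by
  induction m generalizing j with
  | zero => omega
  | succ m ih =>
    rw [longestProd_succ, mul_assoc]
    obtain _ | j := j
    · rw [cyclicDescProd_succ, add_sub_cancel_right, Nat.cast_zero, add_zero, mul_assoc, hidem]
    · have hpush := hT.cyclicDescProd_mul_T (b := c + (j + 1 : ℕ)) (t := m - (j + 1))
        (L := m + 1) (by omega) hm
      rw [show c + ((j + 1 : ℕ) : ZMod n) + ((m - (j + 1) : ℕ) : ZMod n) = c + m by
          rw [Nat.cast_sub (by omega)]; ring,
        show c + ((j + 1 : ℕ) : ZMod n) - 1 = c + j by push_cast; ring] at hpush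
      rw [hpush, ← mul_assoc, ih (by omega) (by omega)]

lemma longestProd_mul_cyclicDescProd (hT : BraidRelations T)
    (hidem : ∀ a, IsIdempotentElem (T a)) {c : ZMod n} {m k l : ℕ} (hk : k < m)
    (hl : l ≤ k + 1) (hm : m + 1 ≤ n) :
    longestProd T c m * cyclicDescProd T (c + k) l = longestProd T c m := by
  induction l with
  | zero => simp
  | succ l ih =>
    have habsorb := hT.longestProd_mul_T hidem (c := c) (j := k - l) (by omega) hm
    rw [Nat.cast_sub (by omega), ← add_sub_assoc] at habsorb
    rw [cyclicDescProd_succ, ← mul_assoc, ih (by omega), habsorb]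

end BraidRelations

end AffineZeroHecke

open AffineZeroHecke in
theorem hecke_longest_element_intertwine_general {M : Type*} [Monoid M] (n : ℕ)
    (T : ZMod n → M)
    (hidem : ∀ a : ZMod n, T a * T a = T a)
    (hcomm : ∀ a b : ZMod n, a - b ≠ 1 → b - a ≠ 1 → T a * T b = T b * T a)
    (hbraid : ∀ a : ZMod n, T a * T (a + 1) * T a = T (a + 1) * T a * T (a + 1))
    (i e : ℕ) (hie : i < e) (hen : e ≤ n) :
    CProd n T i e * DLongest n T 1 (i - 1)
      = DLongest n T 0 i * CProd n T i e := by
  obtain _ | k := i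
  · simp [DLongest]
  have hT : BraidRelations T := ⟨hcomm, hbraid⟩
  obtain ⟨r, hr, hrn⟩ : ∃ r, k + 1 + n - e = k + 1 + r ∧ k + 1 + r + 1 ≤ n :=
    ⟨n - e, by omega, by omega⟩
  have hC : CProd n T (k + 1) e = cyclicDescProd T k (k + 1 + r) := by
    simpa [hr] using CProd_eq_cyclicDescProd T hie.le
  have habsorb :
      longestProd T 0 (k + 1) * cyclicDescProd T k (k + 1) = longestProd T 0 (k + 1) := by
    simpa using hT.longestProd_mul_cyclicDescProd hidem (c := 0) (k := k) (by omega) le_rfl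
      (by omega)
  rw [DLongest_eq_longestProd, DLongest_eq_longestProd, Nat.cast_one, Nat.cast_zero,
    add_tsub_cancel_right, hC]
  calc cyclicDescProd T k (k + 1 + r) * longestProd T 1 k
      = longestProd T 0 k * cyclicDescProd T k (k + 1 + r) := by
        simpa using hT.cyclicDescProd_mul_longestProd (c := 0) (m := k) (by omega) hrn
    _ = longestProd T 0 (k + 1) * cyclicDescProd T k (k + 1 + r) := by
        rw [cyclicDescProd_add T _ (k + 1), ← mul_assoc, ← mul_assoc, habsorb, longestProd_succ,
          zero_add]

/-- Let `v'` be the longest element of `⟨s_1,…,s_{i−1}⟩ ≅ S_i` and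
`v` the longest element of `⟨s_0,…,s_{i−1}⟩ ≅ S_{i+1}`, with `1 ≤ i < e ≤ n`.
Then in the 0-Hecke monoid, `C_{i,e} · D_{v'} = D_v · C_{i,e}`. -/
theorem hecke_longest_element_intertwine {M : Type*} [Monoid M] (n : ℕ) (hn : 3 ≤ n)
    (T : ZMod n → M)
    (hidem : ∀ a : ZMod n, T a * T a = T a)
    (hcomm : ∀ a b : ZMod n, a - b ≠ 1 → b - a ≠ 1 → T a * T b = T b * T a)
    (hbraid : ∀ a : ZMod n, T a * T (a + 1) * T a = T (a + 1) * T a * T (a + 1))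
    (i e : ℕ) (hi : 1 ≤ i) (hie : i < e) (hen : e ≤ n) :
    CProd n T i e * DLongest n T 1 (i - 1)
      = DLongest n T 0 i * CProd n T i e :=
  hecke_longest_element_intertwine_general n T hidem hcomm hbraid i e hie hen
end

section
/- (Consequence: invariance under left Demazure multiplication.) With notation as before, if M is an element of the 0-Hecke monoid of type A_{n−1}^{(1)} satisfying T_j · M = M for all 1 ≤ j < i, then T_j · (C_{i,e} · M) = C_{i,e} · M for all 0 ≤ j < i, where 1 ≤ i < e ≤ n and C_{i,e} = T_{i−1} ⋯ T_0 T_{n−1} ⋯ T_e. -/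
/-!
Write `C_k` for `C_{k,e}`, so that `C_{k+1} = T_k C_k` while `k < e`. By induction on `k ≤ i`,
every `T_j` with `j < k` fixes `C_k x`. For `j = k - 1` this is idempotence of `T_j`; for
`j < k - 2`, `T_j` commutes with `T_{k-1}` and the induction hypothesis applies. The case
`j = k - 2` is the braid relation: `T_{k-2} T_{k-1} T_{k-2} C_{k-2} x = T_{k-1} T_{k-2} T_{k-1} C_{k-2} x`,
and the last `T_{k-1}` moves past `C_{k-2}`, whose letters `k-3, …, e-n` all stay at cyclic
distance at least two from `k-1` because `k < e`, and is then absorbed by `x`.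
-/

theorem ZMod.intCast_ne_intCast_of_lt {n : ℕ} {a b : ℤ} (hab : a < b) (hba : b < a + n) :
    (a : ZMod n) ≠ b := by
  rw [Ne, ZMod.intCast_eq_intCast_iff_dvd_sub]
  intro h
  have := Int.eq_zero_of_dvd_of_natAbs_lt_natAbs h (by omega)
  omega

theorem CWord_eq_map (n i e : ℕ) : CWord n i e =
    (List.range (if e < i then i - e else i + n - e)).map
      fun t : ℕ => (((i : ℤ) - 1 - t : ℤ) : ZMod n) := by
  simp [CWord, ← List.map_eq_flatMap]

theorem CWord_succ {n i e : ℕ} (hie : i < e) (hen : e ≤ n) :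
    CWord n (i + 1) e = (i : ZMod n) :: CWord n i e := by
  have hlen : i + 1 + n - e = i + n - e + 1 := by omega
  rw [CWord_eq_map, CWord_eq_map, if_neg (by omega), if_neg (by omega), hlen,
    List.range_succ_eq_map, List.map_cons, List.map_map]
  congr 1
  · push_cast; ring
  · refine List.map_congr_left fun t _ => ?_
    simp only [Function.comp_apply]
    push_cast; ring

theorem mem_CWord {n i e : ℕ} {a : ZMod n} (hie : i < e) (ha : a ∈ CWord n i e) :
    ∃ t : ℕ, t < i + n - e ∧ a = (((i : ℤ) - 1 - t : ℤ) : ZMod n) := by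
  simp only [CWord_eq_map, if_neg (show ¬e < i by omega), List.mem_map, List.mem_range] at ha
  exact ha.imp fun _ ⟨ht, h⟩ => ⟨ht, h.symm⟩

section Hecke

variable {M : Type*} [Monoid M] {n : ℕ} (T : ZMod n → M)

theorem CProd_succ {i e : ℕ} (hie : i < e) (hen : e ≤ n) :
    CProd n T (i + 1) e = T i * CProd n T i e := by
  rw [CProd, CWord_succ hie hen, List.map_cons, List.prod_cons, CProd]

variable (hcomm : ∀ a b : ZMod n, a - b ≠ 1 → b - a ≠ 1 → T a * T b = T b * T a)
include hcomm

theorem commute_of_add_two_le {a b : ℤ} (hab : a + 2 ≤ b) (hba : b + 2 ≤ a + n) :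
    Commute (T a) (T b) := by
  apply hcomm
  · rw [← Int.cast_sub, ← Int.cast_one]
    exact ZMod.intCast_ne_intCast_of_lt (by omega) (by omega)
  · rw [← Int.cast_sub, ← Int.cast_one]
    exact (ZMod.intCast_ne_intCast_of_lt (by omega) (by omega)).symm

theorem commute_natCast_of_add_two_le {a b : ℕ} (hab : a + 2 ≤ b) (hba : b + 2 ≤ a + n) :
    Commute (T a) (T b) := by
  simpa using commute_of_add_two_le T hcomm (a := a) (b := b) (by omega) (by omega)

theorem commute_CProd {i e : ℕ} (hie : i + 3 ≤ e) :
    Commute (T ((i : ZMod n) + 1)) (CProd n T i e) := by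
  refine Commute.list_prod_right _ _ fun y hy => ?_
  obtain ⟨a, ha, rfl⟩ := List.mem_map.mp hy
  obtain ⟨t, ht, rfl⟩ := mem_CWord (by omega) ha
  have hcast : (i : ZMod n) + 1 = (((i : ℤ) + 1 : ℤ) : ZMod n) := by push_cast; rfl
  rw [hcast]
  exact (commute_of_add_two_le T hcomm (by omega) (by omega)).symm

theorem T_mul_CProd_add_two_mul
    (hbraid : ∀ a : ZMod n, T a * T (a + 1) * T a = T (a + 1) * T a * T (a + 1))
    {i e : ℕ} (hie : i + 3 ≤ e) (hen : e ≤ n) {x : M} (hx : T ((i : ZMod n) + 1) * x = x) :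
    T i * (CProd n T (i + 2) e * x) = CProd n T (i + 2) e * x := by
  rw [CProd_succ T (by omega) hen, CProd_succ T (by omega) hen, Nat.cast_succ]
  have hfix : T (i + 1) * (CProd n T i e * x) = CProd n T i e * x := by
    rw [← mul_assoc, (commute_CProd T hcomm hie).eq, mul_assoc, hx]
  calc T i * (T (i + 1) * (T i * CProd n T i e) * x)
        = T i * T (i + 1) * T i * (CProd n T i e * x) := by simp only [mul_assoc]
    _ = T (i + 1) * T i * (T (i + 1) * (CProd n T i e * x)) := by
        rw [hbraid]; simp only [mul_assoc]
    _ = T (i + 1) * (T i * CProd n T i e) * x := by rw [hfix]; simp only [mul_assoc]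

end Hecke

theorem hecke_left_invariance_general {M : Type*} [Monoid M] (n : ℕ)
    (T : ZMod n → M)
    (hidem : ∀ a : ZMod n, T a * T a = T a)
    (hcomm : ∀ a b : ZMod n, a - b ≠ 1 → b - a ≠ 1 → T a * T b = T b * T a)
    (hbraid : ∀ a : ZMod n, T a * T (a + 1) * T a = T (a + 1) * T a * T (a + 1))
    (i e : ℕ) (hie : i < e) (hen : e ≤ n)
    (x : M) (hx : ∀ j : ℕ, 1 ≤ j → j < i → T ((j : ℕ) : ZMod n) * x = x) :
    ∀ j : ℕ, j < i →
      T ((j : ℕ) : ZMod n) * (CProd n T i e * x) = CProd n T i e * x := by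
  suffices h : ∀ k ≤ i, ∀ j < k, T j * (CProd n T k e * x) = CProd n T k e * x from h i le_rfl
  intro k
  induction k with
  | zero => simp
  | succ k ih =>
    intro hk j hj
    obtain rfl | rfl | hjk : j = k ∨ j + 1 = k ∨ j + 2 ≤ k := by omega
    · rw [CProd_succ T (by omega) hen, mul_assoc, ← mul_assoc (T _), hidem]
    · have hxj := hx (j + 1) (by omega) (by omega)
      rw [Nat.cast_succ] at hxj
      exact T_mul_CProd_add_two_mul T hcomm hbraid (by omega) hen hxj
    · rw [CProd_succ T (by omega) hen, mul_assoc, ← mul_assoc (T j),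
        (commute_natCast_of_add_two_le T hcomm hjk (by omega)).eq, mul_assoc,
        ih (by omega) j (by omega)]

/-- In the 0-Hecke monoid of affine type `A_{n−1}^{(1)}`, if
`T_j · x = x` for all `1 ≤ j < i`, then `T_j · (C_{i,e} · x) = C_{i,e} · x`
for all `0 ≤ j < i`, where `1 ≤ i < e ≤ n`. -/
theorem hecke_left_invariance {M : Type*} [Monoid M] (n : ℕ) (hn : 3 ≤ n)
    (T : ZMod n → M)
    (hidem : ∀ a : ZMod n, T a * T a = T a)
    (hcomm : ∀ a b : ZMod n, a - b ≠ 1 → b - a ≠ 1 → T a * T b = T b * T a)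
    (hbraid : ∀ a : ZMod n, T a * T (a + 1) * T a = T (a + 1) * T a * T (a + 1))
    (i e : ℕ) (hi : 1 ≤ i) (hie : i < e) (hen : e ≤ n)
    (x : M) (hx : ∀ j : ℕ, 1 ≤ j → j < i → T ((j : ℕ) : ZMod n) * x = x) :
    ∀ j : ℕ, j < i →
      T ((j : ℕ) : ZMod n) * (CProd n T i e * x) = CProd n T i e * x :=
  hecke_left_invariance_general n T hidem hcomm hbraid i e hie hen x hx
end
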